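/- Let g > 1 and ν > 0 be real. For N > 0 define D'(N) = √( ((g+1)·N + (g−1)(ν+1) + 1)² − 4g·N·(N+1) ) and I_c(N) = h( g·N + (g−1)(ν+1) ) − h( (D'(N) + (g−1)(N+ν+1) − 1)/2 ) − h( (D'(N) − (g−1)(N+ν+1) − 1)/2 ). Then lim_{N→∞} I_c(N) = −h(ν) + log₂( g/(g−1) ). (I_c(N) is the coherent information of the state obtained by sending half of a two-mode squeezed vacuum with local mean photon number N through the thermal amplifier of gain g and thermal noise ν.) -/

import Mathlib

/-!
Completing the square, the radicand of `D'(N)` is `u² − 4gν(ν+1)` with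
`u = (g−1)N + (g+1)(ν+1) − 1`, so `D'(N) − u → 0`. Hence the three arguments of `h` are
`gN + O(1)`, `(g−1)N + O(1)` and `ν + o(1)`. Since `h(x) = log₂ x + 1/ln 2 + o(1)` as `x → ∞`,
the first two entropies differ by `log₂ (g/(g−1)) + o(1)`, and the third tends to `h(ν)` because
`h` is continuous.
-/

open Filter Real Topology

noncomputable def bosonicEntropy (x : ℝ) : ℝ :=
  (x + 1) * Real.logb 2 (x + 1) - x * Real.logb 2 x

lemma tendsto_sqrt_sq_sub_sub_self {α : Type*} {l : Filter α} {u : α → ℝ}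
    (hu : Tendsto u l atTop) (K : ℝ) :
    Tendsto (fun a => √(u a ^ 2 - K) - u a) l (𝓝 0) := by
  have hsum : Tendsto (fun a => √(u a ^ 2 - K) + u a) l atTop :=
    tendsto_atTop_mono (fun _ => le_add_of_nonneg_left (sqrt_nonneg _)) hu
  have h := (tendsto_const_nhds (x := -K)).div_atTop hsum
  refine h.congr' ?_
  filter_upwards [hu.eventually_gt_atTop 0,
    ((tendsto_pow_atTop two_ne_zero).comp hu).eventually_ge_atTop K] with a hpos hsq
  have hsqrt : √(u a ^ 2 - K) ^ 2 = u a ^ 2 - K := sq_sqrt (sub_nonneg.2 hsq)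
  rw [div_eq_iff (by positivity)]
  linear_combination -hsqrt

lemma tendsto_mul_add_div_self {c d : ℝ} {e : ℝ → ℝ} (he : Tendsto e atTop (𝓝 d)) :
    Tendsto (fun N => (c * N + e N) / N) atTop (𝓝 c) := by
  have h := tendsto_const_nhds (x := c) |>.add (he.div_atTop tendsto_id)
  rw [add_zero] at h
  refine h.congr' ?_
  filter_upwards [eventually_ne_atTop 0] with N hN
  simp only [id]
  field_simp

lemma tendsto_mul_add_atTop {c d : ℝ} {e : ℝ → ℝ} (hc : 0 < c) (he : Tendsto e atTop (𝓝 d)) :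
    Tendsto (fun N => c * N + e N) atTop atTop :=
  (tendsto_id.const_mul_atTop hc).atTop_add he

lemma tendsto_mul_add_div_mul_add {a b d d' : ℝ} {e f : ℝ → ℝ} (hb : b ≠ 0)
    (he : Tendsto e atTop (𝓝 d)) (hf : Tendsto f atTop (𝓝 d')) :
    Tendsto (fun N => (a * N + e N) / (b * N + f N)) atTop (𝓝 (a / b)) := by
  refine ((tendsto_mul_add_div_self he).div (tendsto_mul_add_div_self hf) hb).congr' ?_
  filter_upwards [eventually_ne_atTop 0] with N hN
  exact div_div_div_cancel_right₀ hN _ _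

lemma bosonicEntropy_eq (x : ℝ) :
    bosonicEntropy x = ((x + 1) * log (x + 1) - x * log x) / log 2 := by
  simp only [bosonicEntropy, logb]
  ring

lemma continuous_bosonicEntropy : Continuous bosonicEntropy := by
  simp only [funext bosonicEntropy_eq]
  exact ((continuous_mul_log.comp (continuous_add_const 1)).sub continuous_mul_log).div_const _

lemma tendsto_bosonicEntropy_sub_logb_atTop :
    Tendsto (fun x => bosonicEntropy x - logb 2 x) atTop (𝓝 (log 2)⁻¹) := by
  -- `h x − log₂ x = −(x + 1) · log (1 − 1/(x + 1)) / log 2`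
  have h := ((tendsto_mul_log_one_add_div_atTop (-1)).comp
    (tendsto_atTop_add_const_right atTop 1 tendsto_id)).neg.div_const (log 2)
  rw [neg_neg, one_div] at h
  refine h.congr' ?_
  filter_upwards [eventually_gt_atTop 0] with x hx
  have hx1 : x + 1 ≠ 0 := by positivity
  rw [Function.comp_apply, id, show 1 + -1 / (x + 1) = x / (x + 1) by field_simp; ring,
    log_div hx.ne' hx1, bosonicEntropy_eq, logb]
  ring

lemma tendsto_bosonicEntropy_sub_bosonicEntropy {α : Type*} {l : Filter α} {x y : α → ℝ}
    (hx : Tendsto x l atTop) (hy : Tendsto y l atTop) {c : ℝ} (hc : 0 < c)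
    (hxy : Tendsto (fun a => x a / y a) l (𝓝 c)) :
    Tendsto (fun a => bosonicEntropy (x a) - bosonicEntropy (y a)) l (𝓝 (logb 2 c)) := by
  have h := ((tendsto_bosonicEntropy_sub_logb_atTop.comp hx).sub
    (tendsto_bosonicEntropy_sub_logb_atTop.comp hy)).add
    (((continuousAt_logb (b := 2) hc.ne').tendsto).comp hxy)
  rw [sub_self, zero_add] at h
  refine h.congr' ?_
  filter_upwards [hx.eventually_gt_atTop 0, hy.eventually_gt_atTop 0] with a hxa hya
  simp only [Function.comp_apply, logb_div hxa.ne' hya.ne']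
  ring

lemma tendsto_bosonicEntropy_mul_add_sub {a b d d' : ℝ} {e f : ℝ → ℝ} (ha : 0 < a) (hb : 0 < b)
    (he : Tendsto e atTop (𝓝 d)) (hf : Tendsto f atTop (𝓝 d')) :
    Tendsto (fun N => bosonicEntropy (a * N + e N) - bosonicEntropy (b * N + f N)) atTop
      (𝓝 (logb 2 (a / b))) :=
  tendsto_bosonicEntropy_sub_bosonicEntropy (tendsto_mul_add_atTop ha he)
    (tendsto_mul_add_atTop hb hf) (div_pos ha hb) (tendsto_mul_add_div_mul_add hb.ne' he hf)

theorem stmt8_general (g nu : ℝ) (hg : 1 < g) :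
    Filter.Tendsto (fun N : ℝ =>
        bosonicEntropy (g * N + (g - 1) * (nu + 1))
          - bosonicEntropy
            ((Real.sqrt (((g + 1) * N + (g - 1) * (nu + 1) + 1) ^ 2 - 4 * g * N * (N + 1))
                + (g - 1) * (N + nu + 1) - 1) / 2)
          - bosonicEntropy
            ((Real.sqrt (((g + 1) * N + (g - 1) * (nu + 1) + 1) ^ 2 - 4 * g * N * (N + 1))
                - (g - 1) * (N + nu + 1) - 1) / 2))
      Filter.atTop
      (nhds (-(bosonicEntropy nu) + Real.logb 2 (g / (g - 1)))) := by
  set A := (g + 1) * (nu + 1) - 1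
  set D := fun N : ℝ => √(((g + 1) * N + (g - 1) * (nu + 1) + 1) ^ 2 - 4 * g * N * (N + 1))
  have hD : Tendsto (fun N => D N - ((g - 1) * N + A)) atTop (𝓝 0) := by
    have hrad (N : ℝ) : ((g + 1) * N + (g - 1) * (nu + 1) + 1) ^ 2 - 4 * g * N * (N + 1)
        = ((g - 1) * N + A) ^ 2 - 4 * g * nu * (nu + 1) := by ring
    simp only [D, hrad]
    exact tendsto_sqrt_sq_sub_sub_self
      (tendsto_mul_add_atTop (sub_pos.2 hg) tendsto_const_nhds) _
  have hδ (c : ℝ) : Tendsto (fun N => (D N - ((g - 1) * N + A)) / 2 + c) atTop (𝓝 c) := by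
    simpa using (hD.div_const 2).add_const c
  have hlim := (tendsto_bosonicEntropy_mul_add_sub (a := g) (by linarith) (sub_pos.2 hg)
    (tendsto_const_nhds (x := (g - 1) * (nu + 1))) (hδ (g * (nu + 1) - 1))).sub
    ((continuous_bosonicEntropy.tendsto nu).comp (hδ nu))
  rw [neg_add_eq_sub]
  refine hlim.congr fun N => ?_
  simp only [Function.comp_apply, D, A]
  ring_nf

/-- For a thermal amplifier of gain `g > 1` and thermal noise `ν > 0`, the coherent
information `I_c(N)` of the output of half a two-mode squeezed vacuum with local mean photon
number `N` tends to `−h(ν) + log₂(g/(g−1))` as `N → ∞`. -/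
theorem stmt8 (g nu : ℝ) (hg : 1 < g) (hnu : 0 < nu) :
    Filter.Tendsto (fun N : ℝ =>
        bosonicEntropy (g * N + (g - 1) * (nu + 1))
          - bosonicEntropy
            ((Real.sqrt (((g + 1) * N + (g - 1) * (nu + 1) + 1) ^ 2 - 4 * g * N * (N + 1))
                + (g - 1) * (N + nu + 1) - 1) / 2)
          - bosonicEntropy
            ((Real.sqrt (((g + 1) * N + (g - 1) * (nu + 1) + 1) ^ 2 - 4 * g * N * (N + 1))
                - (g - 1) * (N + nu + 1) - 1) / 2))
      Filter.atTop
      (nhds (-(bosonicEntropy nu) + Real.logb 2 (g / (g - 1)))) :=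
  stmt8_general g nu hg
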